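/- arXiv:2601.08153 — 8 statements merged into one kernel-verified Lean document; each statement's English description precedes it below -/
import Mathlib

section
/- Let (X,‖·‖) be a real normed space, n ≥ 2, and ψ ∈ Ψ_n. Then for every x = (x_1,…,x_n) ∈ X^n and every x* = (x*_1,…,x*_n) ∈ (X*)^n, one has Σ_{i=1}^n ‖x*_i‖*·‖x_i‖ ≤ |||x*|||_{ψ*} · |||x|||_ψ. -/
/-!
Every `ψ ∈ Ψ_n` dominates the coordinates: `t_j ≤ ψ t` on the simplex. Indeed the
renormalisation inequality lets one delete the coordinates `i ≠ j` of `t` one at a time,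
each step costing the factor `1 - t_i`, until only `t_j · ψ(e_j) = t_j` is left.
Hence `⟨t, s⟩ ≤ ψ t` for `s` in the simplex, so the quotients defining `ψ*` are bounded
and `⟨t, s⟩ ≤ ψ*(s) ψ(t)`. Applied to `t = (‖x_i‖)/Σ‖x_j‖` and `s = (‖x*_i‖)/Σ‖x*_j‖`
and multiplied by both sums, this is the claim.
-/

open Finset

/-- The class `Ψ_n` of continuous convex functions on the standard simplex `Ω_n`
with `ψ(e_i) = 1` and the renormalization inequality. -/
def PsiClass (n : ℕ) (ψ : (Fin n → ℝ) → ℝ) : Prop :=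
  ContinuousOn ψ (stdSimplex ℝ (Fin n)) ∧
  ConvexOn ℝ (stdSimplex ℝ (Fin n)) ψ ∧
  (∀ i : Fin n, ψ (fun j => if j = i then 1 else 0) = 1) ∧
  (∀ t ∈ stdSimplex ℝ (Fin n), ∀ i : Fin n, t i < 1 →
    (1 - t i) * ψ (fun j => if j = i then 0 else t j / (1 - t i)) ≤ ψ t)

-- The `ψ`-product norm `|||x|||_ψ` on `X^n`.
open scoped Classical in
noncomputable def prodNorm {X : Type*} [NormedAddCommGroup X] {n : ℕ}
    (ψ : (Fin n → ℝ) → ℝ) (x : Fin n → X) : ℝ :=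
  if x = 0 then 0 else (∑ i, ‖x i‖) * ψ (fun i => ‖x i‖ / ∑ j, ‖x j‖)

/-- The conjugate-type function `ψ*(s) = max_{t ∈ Ω_n} ⟨t,s⟩ / ψ(t)`. -/
noncomputable def psiStar {n : ℕ} (ψ : (Fin n → ℝ) → ℝ) (s : Fin n → ℝ) : ℝ :=
  sSup ((fun t : Fin n → ℝ => (∑ i, t i * s i) / ψ t) '' stdSimplex ℝ (Fin n))

section Simplex

variable {ι : Type*} [Fintype ι]

lemma sum_norm_pos {E : Type*} [NormedAddCommGroup E] {x : ι → E} (hx : x ≠ 0) :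
    0 < ∑ i, ‖x i‖ := by
  obtain ⟨i, hi⟩ := Function.ne_iff.mp hx
  exact sum_pos' (fun i _ => norm_nonneg _) ⟨i, mem_univ i, norm_pos_iff.mpr hi⟩

lemma div_sum_mem_stdSimplex {a : ι → ℝ} (ha : ∀ i, 0 ≤ a i) (hpos : 0 < ∑ i, a i) :
    (fun i => a i / ∑ j, a j) ∈ stdSimplex ℝ ι :=
  ⟨fun i => div_nonneg (ha i) hpos.le, by rw [← sum_div, div_self hpos.ne']⟩

lemma exists_pos_of_mem_stdSimplex {t : ι → ℝ} (ht : t ∈ stdSimplex ℝ ι) :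
    ∃ k, 0 < t k := by
  obtain ⟨k, -, hk⟩ := exists_lt_of_sum_lt (s := univ) (f := 0) (g := t) (by simp [ht.2])
  exact ⟨k, hk⟩

variable [DecidableEq ι]

lemma erase_renormalize_mem_stdSimplex {t : ι → ℝ} (ht : t ∈ stdSimplex ℝ ι) {i : ι}
    (hi : t i < 1) :
    (fun j => if j = i then 0 else t j / (1 - t i)) ∈ stdSimplex ℝ ι := by
  have hpos : 0 < 1 - t i := sub_pos.mpr hi
  refine ⟨fun j => ?_, ?_⟩
  · dsimp only
    split_ifs
    exacts [le_rfl, div_nonneg (ht.1 j) hpos.le]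
  · dsimp only
    rw [← sum_erase univ (f := fun j => if j = i then (0 : ℝ) else t j / (1 - t i))
        (if_pos rfl), sum_congr rfl fun j hj => if_neg (ne_of_mem_erase hj), ← sum_div,
      sum_erase_eq_sub (mem_univ i), ht.2, div_self hpos.ne']

end Simplex

namespace PsiClass

variable {n : ℕ} {ψ : (Fin n → ℝ) → ℝ}

lemma apply_le_of_pos (hψ : PsiClass n ψ) {t : Fin n → ℝ} (ht : t ∈ stdSimplex ℝ (Fin n))
    {j : Fin n} (hj : 0 < t j) : t j ≤ ψ t := by
  suffices key : ∀ s : Finset (Fin n), ∀ t ∈ stdSimplex ℝ (Fin n), 0 < t j →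
      (∀ i ∉ s, i ≠ j → t i = 0) → t j ≤ ψ t from
    key univ t ht hj fun i hi => absurd (mem_univ i) hi
  intro s
  induction s using Finset.induction_on with
  | empty =>
    intro t ht _ hzero
    have htj : t j = 1 := by
      rw [← ht.2, sum_eq_single j (fun i _ hij => hzero i (notMem_empty i) hij) (by simp)]
    have hvertex : t = fun m => if m = j then 1 else 0 := by
      funext m
      split_ifs with hmj
      exacts [hmj ▸ htj, hzero m (notMem_empty m) hmj]
    rw [htj, hvertex, hψ.2.2.1 j]
  | insert a s _ ih =>
    intro t ht hj hzero
    by_cases haj : a = j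
    · exact ih t ht hj fun i his hij => hzero i (by simp [his, haj ▸ hij]) hij
    have hta : t a < 1 := by
      have := add_le_sum (fun i _ => ht.1 i) (mem_univ a) (mem_univ j) haj
      linarith [ht.2]
    have hpos : 0 < 1 - t a := sub_pos.mpr hta
    set u : Fin n → ℝ := fun m => if m = a then 0 else t m / (1 - t a)
    have huj : u j = t j / (1 - t a) := if_neg (Ne.symm haj)
    have hu : t j / (1 - t a) ≤ ψ u := huj ▸ ih u (erase_renormalize_mem_stdSimplex ht hta)
      (huj ▸ div_pos hj hpos) fun i his hij => by
        by_cases hia : i = a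
        · exact if_pos hia
        · simp [u, hia, hzero i (by simp [his, hia]) hij]
    calc t j = (1 - t a) * (t j / (1 - t a)) := by field_simp
      _ ≤ (1 - t a) * ψ u := mul_le_mul_of_nonneg_left hu hpos.le
      _ ≤ ψ t := hψ.2.2.2 t ht a hta

lemma apply_le (hψ : PsiClass n ψ) {t : Fin n → ℝ} (ht : t ∈ stdSimplex ℝ (Fin n))
    (j : Fin n) : t j ≤ ψ t := by
  rcases (ht.1 j).eq_or_lt with hj | hj
  · obtain ⟨k, hk⟩ := exists_pos_of_mem_stdSimplex ht
    exact hj ▸ hk.le.trans (hψ.apply_le_of_pos ht hk)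
  · exact hψ.apply_le_of_pos ht hj

lemma pos (hψ : PsiClass n ψ) {t : Fin n → ℝ} (ht : t ∈ stdSimplex ℝ (Fin n)) :
    0 < ψ t := by
  obtain ⟨k, hk⟩ := exists_pos_of_mem_stdSimplex ht
  exact hk.trans_le (hψ.apply_le ht k)

lemma sum_mul_le (hψ : PsiClass n ψ) {t s : Fin n → ℝ} (ht : t ∈ stdSimplex ℝ (Fin n))
    (hs : s ∈ stdSimplex ℝ (Fin n)) : ∑ i, t i * s i ≤ ψ t :=
  calc ∑ i, t i * s i ≤ ∑ i, ψ t * s i :=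
        sum_le_sum fun i _ => mul_le_mul_of_nonneg_right (hψ.apply_le ht i) (hs.1 i)
    _ = ψ t := by rw [← mul_sum, hs.2, mul_one]

lemma bddAbove_psiStar_image (hψ : PsiClass n ψ) {s : Fin n → ℝ}
    (hs : s ∈ stdSimplex ℝ (Fin n)) :
    BddAbove ((fun t : Fin n → ℝ => (∑ i, t i * s i) / ψ t) '' stdSimplex ℝ (Fin n)) := by
  refine ⟨1, ?_⟩
  rintro _ ⟨t, ht, rfl⟩
  exact div_le_one_of_le₀ (hψ.sum_mul_le ht hs) (hψ.pos ht).le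

lemma sum_mul_le_psiStar_mul (hψ : PsiClass n ψ) {t s : Fin n → ℝ}
    (ht : t ∈ stdSimplex ℝ (Fin n)) (hs : s ∈ stdSimplex ℝ (Fin n)) :
    ∑ i, t i * s i ≤ psiStar ψ s * ψ t :=
  (div_le_iff₀ (hψ.pos ht)).mp (le_csSup (hψ.bddAbove_psiStar_image hs) ⟨t, ht, rfl⟩)

lemma sum_mul_le_of_nonneg (hψ : PsiClass n ψ) {a b : Fin n → ℝ} (ha : ∀ i, 0 ≤ a i)
    (hb : ∀ i, 0 ≤ b i) (hA : 0 < ∑ i, a i) (hB : 0 < ∑ i, b i) :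
    ∑ i, b i * a i ≤
      ((∑ i, b i) * psiStar ψ (fun i => b i / ∑ j, b j)) *
        ((∑ i, a i) * ψ (fun i => a i / ∑ j, a j)) := by
  have key := hψ.sum_mul_le_psiStar_mul (div_sum_mem_stdSimplex ha hA)
    (div_sum_mem_stdSimplex hb hB)
  have hnormalize : ∑ i, a i / (∑ j, a j) * (b i / ∑ j, b j) =
      (∑ i, b i * a i) / ((∑ i, a i) * ∑ i, b i) := by
    rw [sum_div]
    exact sum_congr rfl fun i _ => by rw [div_mul_div_comm, mul_comm (a i)]
  rw [hnormalize, div_le_iff₀ (mul_pos hA hB)] at key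
  linarith

end PsiClass

theorem stmt_1_general {X : Type*} [NormedAddCommGroup X] [NormedSpace ℝ X]
    (n : ℕ) (ψ : (Fin n → ℝ) → ℝ) (hψ : PsiClass n ψ)
    (x : Fin n → X) (xs : Fin n → (X →L[ℝ] ℝ)) :
    ∑ i, ‖xs i‖ * ‖x i‖ ≤ prodNorm (psiStar ψ) xs * prodNorm ψ x := by
  by_cases hx : x = 0
  · simp [hx, prodNorm]
  by_cases hxs : xs = 0
  · simp [hxs, prodNorm]
  rw [prodNorm, prodNorm, if_neg hxs, if_neg hx]
  exact hψ.sum_mul_le_of_nonneg (fun _ => norm_nonneg _) (fun _ => norm_nonneg _)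
    (sum_norm_pos hx) (sum_norm_pos hxs)

theorem stmt_1 {X : Type*} [NormedAddCommGroup X] [NormedSpace ℝ X]
    (n : ℕ) (hn : 2 ≤ n) (ψ : (Fin n → ℝ) → ℝ) (hψ : PsiClass n ψ)
    (x : Fin n → X) (xs : Fin n → (X →L[ℝ] ℝ)) :
    ∑ i, ‖xs i‖ * ‖x i‖ ≤ prodNorm (psiStar ψ) xs * prodNorm ψ x :=
  stmt_1_general n ψ hψ x xs
end

section
/- Let (X,‖·‖) be a real normed space, n ≥ 2, x = (x_1,…,x_n) ∈ X^n and x* = (x*_1,…,x*_n) ∈ (X*)^n. Then the equality Σ_{i=1}^n ⟨x*_i, x_i⟩ = (max_{1≤i≤n} ‖x_i‖) · (Σ_{i=1}^n ‖x*_i‖*) holds if and only if both of the following are satisfied: (i) ⟨x*_i, x_i⟩ = ‖x*_i‖*·‖x_i‖ for all i = 1,…,n, and (ii) (‖x_i‖ − max_{1≤j≤n} ‖x_j‖)·‖x*_i‖* = 0 for all i = 1,…,n. -/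
open Finset

theorem stmt_2 {X : Type*} [NormedAddCommGroup X] [NormedSpace ℝ X]
    (n : ℕ) (hn : 2 ≤ n) (x : Fin n → X) (xs : Fin n → (X →L[ℝ] ℝ)) :
    (∑ i, xs i (x i) = (⨆ i, ‖x i‖) * ∑ i, ‖xs i‖) ↔
      ((∀ i, xs i (x i) = ‖xs i‖ * ‖x i‖) ∧
        (∀ i, (‖x i‖ - ⨆ j, ‖x j‖) * ‖xs i‖ = 0)) := by
  have : NeZero n := ⟨by omega⟩
  set M := ⨆ j, ‖x j‖ with hM
  have hle : ∀ i, ‖x i‖ ≤ M := fun i =>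
    le_ciSup (f := fun j => ‖x j‖) (Set.Finite.bddAbove (Set.finite_range _)) i
  have hb : ∀ i, xs i (x i) ≤ ‖xs i‖ * ‖x i‖ := fun i => by
    calc xs i (x i) ≤ ‖xs i (x i)‖ := Real.le_norm_self _
      _ ≤ ‖xs i‖ * ‖x i‖ := (xs i).le_opNorm _
  have hterm : ∀ i ∈ Finset.univ, xs i (x i) ≤ ‖xs i‖ * M := by
    intro i _
    exact (hb i).trans (mul_le_mul_of_nonneg_left (hle i) (norm_nonneg _))
  rw [show M * ∑ i, ‖xs i‖ = ∑ i, ‖xs i‖ * M by rw [Finset.mul_sum]; simp [mul_comm]]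
  rw [Finset.sum_eq_sum_iff_of_le hterm]
  constructor
  · intro h
    constructor
    · intro i
      have h1 := h i (Finset.mem_univ i)
      have h3 : ‖xs i‖ * ‖x i‖ ≤ ‖xs i‖ * M :=
        mul_le_mul_of_nonneg_left (hle i) (norm_nonneg _)
      have := hb i
      linarith
    · intro i
      have h1 := h i (Finset.mem_univ i)
      have h3 : ‖xs i‖ * ‖x i‖ ≤ ‖xs i‖ * M :=
        mul_le_mul_of_nonneg_left (hle i) (norm_nonneg _)
      have := hb i
      nlinarith
  · rintro ⟨h1, h2⟩ i _
    have e2 := h2 i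
    have e1 := h1 i
    nlinarith
end

section
/- Let (X,‖·‖) be a real normed space, n ≥ 2, x = (x_1,…,x_n) ∈ X^n and x* = (x*_1,…,x*_n) ∈ (X*)^n. Then the equality Σ_{i=1}^n ⟨x*_i, x_i⟩ = (max_{1≤i≤n} ‖x*_i‖*) · (Σ_{i=1}^n ‖x_i‖) holds if and only if both of the following are satisfied: (i) ⟨x*_i, x_i⟩ = ‖x*_i‖*·‖x_i‖ for all i = 1,…,n, and (ii) (‖x*_i‖* − max_{1≤j≤n} ‖x*_j‖*)·‖x_i‖ = 0 for all i = 1,…,n. -/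
/-! Termwise, `⟨x*_i, x_i⟩ ≤ ‖x*_i‖ ‖x_i‖ ≤ (max_j ‖x*_j‖) ‖x_i‖`. Summing, the two ends agree
exactly when every term sits at equality in both inequalities, and these two equalities are
conditions (i) and (ii). -/

open Finset

theorem Finset.sum_eq_sum_iff_of_le_of_le {ι M : Type*} [AddCommMonoid M] [PartialOrder M]
    [IsOrderedCancelAddMonoid M] {s : Finset ι} {a b c : ι → M}
    (hab : ∀ i ∈ s, a i ≤ b i) (hbc : ∀ i ∈ s, b i ≤ c i) :
    ∑ i ∈ s, a i = ∑ i ∈ s, c i ↔ (∀ i ∈ s, a i = b i) ∧ ∀ i ∈ s, b i = c i := by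
  rw [sum_eq_sum_iff_of_le fun i hi => (hab i hi).trans (hbc i hi), ← forall₂_and]
  refine forall₂_congr fun i hi => ⟨fun hac => ?_, fun ⟨hab', hbc'⟩ => hab'.trans hbc'⟩
  exact ⟨(hab i hi).antisymm ((hbc i hi).trans_eq hac.symm),
    (hbc i hi).antisymm (hac.symm.trans_le (hab i hi))⟩

theorem ContinuousLinearMap.apply_le_opNorm_mul_norm {X : Type*} [SeminormedAddCommGroup X]
    [NormedSpace ℝ X] (f : X →L[ℝ] ℝ) (x : X) : f x ≤ ‖f‖ * ‖x‖ :=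
  (Real.le_norm_self _).trans (f.le_opNorm x)

theorem sum_apply_eq_mul_sum_norm_iff {ι X : Type*} [SeminormedAddCommGroup X] [NormedSpace ℝ X]
    {s : Finset ι} (x : ι → X) (f : ι → (X →L[ℝ] ℝ)) {M : ℝ} (hM : ∀ i ∈ s, ‖f i‖ ≤ M) :
    ∑ i ∈ s, f i (x i) = M * ∑ i ∈ s, ‖x i‖ ↔
      (∀ i ∈ s, f i (x i) = ‖f i‖ * ‖x i‖) ∧ ∀ i ∈ s, (‖f i‖ - M) * ‖x i‖ = 0 := by
  rw [mul_sum, sum_eq_sum_iff_of_le_of_le (fun i _ => (f i).apply_le_opNorm_mul_norm (x i))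
    fun i hi => mul_le_mul_of_nonneg_right (hM i hi) (norm_nonneg _)]
  simp only [sub_mul, sub_eq_zero]

theorem stmt_3_general {X : Type*} [NormedAddCommGroup X] [NormedSpace ℝ X]
    (n : ℕ) (x : Fin n → X) (xs : Fin n → (X →L[ℝ] ℝ)) :
    (∑ i, xs i (x i) = (⨆ i, ‖xs i‖) * ∑ i, ‖x i‖) ↔
      ((∀ i, xs i (x i) = ‖xs i‖ * ‖x i‖) ∧
        (∀ i, (‖xs i‖ - ⨆ j, ‖xs j‖) * ‖x i‖ = 0)) := by
  have hM : ∀ i ∈ univ, ‖xs i‖ ≤ ⨆ j, ‖xs j‖ := fun i _ =>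
    le_ciSup (Set.finite_range fun j => ‖xs j‖).bddAbove i
  simpa only [mem_univ, true_imp_iff] using sum_apply_eq_mul_sum_norm_iff x xs hM

theorem stmt_3 {X : Type*} [NormedAddCommGroup X] [NormedSpace ℝ X]
    (n : ℕ) (hn : 2 ≤ n) (x : Fin n → X) (xs : Fin n → (X →L[ℝ] ℝ)) :
    (∑ i, xs i (x i) = (⨆ i, ‖xs i‖) * ∑ i, ‖x i‖) ↔
      ((∀ i, xs i (x i) = ‖xs i‖ * ‖x i‖) ∧
        (∀ i, (‖xs i‖ - ⨆ j, ‖xs j‖) * ‖x i‖ = 0)) :=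
  stmt_3_general n x xs
end

section
/- Let (X,‖·‖) be a real normed space whose norm is strictly convex in the sense that ‖a+b‖ = ‖a‖+‖b‖ with a ≠ 0 and b ≠ 0 implies a = ξ b for some ξ > 0 (equivalently, X is a strictly convex space). Let n ≥ 2 and v_1,…,v_n ∈ X be points that do not all lie on a single affine line. Then the function f(u) := Σ_{i=1}^n ‖u−v_i‖ is strictly convex on X, i.e. f(λu+(1−λ)v) < λf(u)+(1−λ)f(v) for all u ≠ v in X and λ ∈ (0,1). -/
open Finset

/-!
Each summand `u ↦ ‖u - vᵢ‖` is convex, so it suffices that one of them is strictly convex along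
the segment `[u, w]`. Equality in the triangle inequality for `λ(u - vᵢ) + (1 - λ)(w - vᵢ)` forces
`u - vᵢ` and `w - vᵢ` onto a common ray, which puts `vᵢ` on the line through `u` and `w`; since the
`vᵢ` are not collinear, some `vᵢ` avoids that line.
-/

theorem StrictConvexSpace.of_norm_add_eq_imp_exists_pos_smul {X : Type*} [NormedAddCommGroup X]
    [NormedSpace ℝ X]
    (h : ∀ a b : X, a ≠ 0 → b ≠ 0 → ‖a + b‖ = ‖a‖ + ‖b‖ → ∃ ξ : ℝ, 0 < ξ ∧ a = ξ • b) :
    StrictConvexSpace ℝ X := by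
  refine StrictConvexSpace.of_norm_add fun x y hx hy hxy => ?_
  have hx0 : x ≠ 0 := norm_ne_zero_iff.1 (by rw [hx]; exact one_ne_zero)
  have hy0 : y ≠ 0 := norm_ne_zero_iff.1 (by rw [hy]; exact one_ne_zero)
  obtain ⟨ξ, hξ, rfl⟩ := h x y hx0 hy0 (by rw [hxy, hx, hy]; norm_num)
  exact SameRay.sameRay_nonneg_smul_left y hξ.le

theorem collinear_affineSpan_iff {k V P : Type*} [DivisionRing k] [AddCommGroup V] [Module k V]
    [AddTorsor V P] {s : Set P} : Collinear k (affineSpan k s : Set P) ↔ Collinear k s := by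
  rw [Collinear, Collinear, ← AffineSubspace.direction_eq_vectorSpan, direction_affineSpan]

theorem mem_affineSpan_pair_of_sameRay_sub {X : Type*} [AddCommGroup X] [Module ℝ X]
    {u w p : X} (huw : u ≠ w) (h : SameRay ℝ (u - p) (w - p)) : p ∈ line[ℝ, u, w] := by
  have hcol : Collinear ℝ ({p, u, w} : Set X) := by
    rcases wbtw_total_of_sameRay_vsub_left (R := ℝ) (x := p) (y := u) (z := w) h with h' | h'
    · exact h'.collinear
    · simpa only [Set.pair_comm] using h'.collinear
  exact hcol.mem_affineSpan_of_mem_of_ne (by simp) (by simp) (by simp) huw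

section NormCombo

variable {X : Type*} [NormedAddCommGroup X] [NormedSpace ℝ X] {u w p : X} {a b : ℝ}

theorem combo_sub_eq_combo_sub (hab : a + b = 1) :
    a • u + b • w - p = a • (u - p) + b • (w - p) := by
  rw [eq_sub_of_add_eq' hab]
  module

theorem norm_combo_sub_le (ha : 0 ≤ a) (hb : 0 ≤ b) (hab : a + b = 1) :
    ‖a • u + b • w - p‖ ≤ a * ‖u - p‖ + b * ‖w - p‖ := by
  rw [combo_sub_eq_combo_sub hab, ← norm_smul_of_nonneg ha, ← norm_smul_of_nonneg hb]
  exact norm_add_le _ _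

theorem norm_combo_sub_lt_of_notMem_affineSpan_pair [StrictConvexSpace ℝ X] (huw : u ≠ w)
    (hp : p ∉ line[ℝ, u, w]) (ha : 0 < a) (hb : 0 < b) (hab : a + b = 1) :
    ‖a • u + b • w - p‖ < a * ‖u - p‖ + b * ‖w - p‖ := by
  have hray : ¬SameRay ℝ (a • (u - p)) (b • (w - p)) := by
    refine fun h => hp (mem_affineSpan_pair_of_sameRay_sub huw ?_)
    simpa only [smul_smul, inv_mul_cancel₀ ha.ne', inv_mul_cancel₀ hb.ne', one_smul] using
      (h.pos_smul_left (inv_pos.2 ha)).pos_smul_right (inv_pos.2 hb)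
  rw [combo_sub_eq_combo_sub hab, ← norm_smul_of_nonneg ha.le, ← norm_smul_of_nonneg hb.le]
  exact norm_add_lt_of_not_sameRay hray

end NormCombo

theorem strictConvexOn_sum_norm_sub {X ι : Type*} [NormedAddCommGroup X] [NormedSpace ℝ X]
    [StrictConvexSpace ℝ X] [Fintype ι] {v : ι → X} (hv : ¬Collinear ℝ (Set.range v)) :
    StrictConvexOn ℝ Set.univ fun u => ∑ i, ‖u - v i‖ := by
  refine ⟨convex_univ, fun u _ w _ huw a b ha hb hab => ?_⟩
  obtain ⟨j, hj⟩ : ∃ j, v j ∉ line[ℝ, u, w] := by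
    by_contra! h
    exact hv ((collinear_affineSpan_iff.2 (collinear_pair ℝ u w)).subset (Set.range_subset_iff.2 h))
  calc ∑ i, ‖a • u + b • w - v i‖ < ∑ i, (a * ‖u - v i‖ + b * ‖w - v i‖) :=
        sum_lt_sum (fun i _ => norm_combo_sub_le ha.le hb.le hab)
          ⟨j, mem_univ j, norm_combo_sub_lt_of_notMem_affineSpan_pair huw hj ha hb hab⟩
    _ = a • ∑ i, ‖u - v i‖ + b • ∑ i, ‖w - v i‖ := by
        simp only [smul_eq_mul, sum_add_distrib, mul_sum]

theorem stmt_10_general {X : Type*} [NormedAddCommGroup X] [NormedSpace ℝ X]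
    (hsc : ∀ a b : X, a ≠ 0 → b ≠ 0 → ‖a + b‖ = ‖a‖ + ‖b‖ →
      ∃ ξ : ℝ, 0 < ξ ∧ a = ξ • b)
    (n : ℕ) (v : Fin n → X)
    (hcol : ¬ ∃ a b : X, ∀ i : Fin n, ∃ t : ℝ, v i = t • a + (1 - t) • b) :
    ∀ u w : X, u ≠ w → ∀ l : ℝ, 0 < l → l < 1 →
      (∑ i, ‖(l • u + (1 - l) • w) - v i‖) <
        l * (∑ i, ‖u - v i‖) + (1 - l) * (∑ i, ‖w - v i‖) := by
  have := StrictConvexSpace.of_norm_add_eq_imp_exists_pos_smul hsc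
  have hv : ¬Collinear ℝ (Set.range v) := by
    rw [collinear_iff_exists_forall_eq_smul_vadd]
    rintro ⟨p₀, d, hd⟩
    refine hcol ⟨d + p₀, p₀, fun i => ?_⟩
    obtain ⟨t, ht⟩ := hd (v i) (Set.mem_range_self i)
    exact ⟨t, by rw [ht, vadd_eq_add]; module⟩
  intro u w huw l hl0 hl1
  exact (strictConvexOn_sum_norm_sub hv).2 trivial trivial huw hl0 (sub_pos.2 hl1)
    (add_sub_cancel l 1)

theorem stmt_10 {X : Type*} [NormedAddCommGroup X] [NormedSpace ℝ X]
    (hsc : ∀ a b : X, a ≠ 0 → b ≠ 0 → ‖a + b‖ = ‖a‖ + ‖b‖ →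
      ∃ ξ : ℝ, 0 < ξ ∧ a = ξ • b)
    (n : ℕ) (hn : 2 ≤ n) (v : Fin n → X)
    (hcol : ¬ ∃ a b : X, ∀ i : Fin n, ∃ t : ℝ, v i = t • a + (1 - t) • b) :
    ∀ u w : X, u ≠ w → ∀ l : ℝ, 0 < l → l < 1 →
      (∑ i, ‖(l • u + (1 - l) • w) - v i‖) <
        l * (∑ i, ‖u - v i‖) + (1 - l) * (∑ i, ‖w - v i‖) :=
  stmt_10_general hsc n v hcol
end

section
/- Let X be a real normed space, n ≥ 2, ν : X^n → ℝ a norm on X^n (ν(x) = 0 iff x = 0, ν(x+y) ≤ ν(x)+ν(y), ν(c·x) = |c|·ν(x) for c ∈ ℝ), and v_1,…,v_n ∈ X distinct. Define f(u) := ν(u−v_1,…,u−v_n) for u ∈ X. Suppose ū ∈ X is a global minimizer of f and x*_1,…,x*_n ∈ X* satisfy Σ_{i=1}^n x*_i = 0, ν*(x*_1,…,x*_n) = 1, and Σ_{i=1}^n ⟨x*_i, ū − v_i⟩ = ν(ū−v_1,…,ū−v_n), where ν*(x*) := sup{Σ_{i=1}^n ⟨x*_i, x_i⟩ : ν(x)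 ≤ 1}. Then the set of all global minimizers of f equals {u ∈ X : Σ_{i=1}^n ⟨x*_i, u − v_i⟩ = ν(u−v_1,…,u−v_n)}. -/
open Finset

/-- The dual norm on `(X*)^n` of a norm `ν` on `X^n`:
`ν*(x*) = sup { Σ ⟨x*_i, x_i⟩ : ν(x) ≤ 1 }`. -/
noncomputable def dualNormOf {X : Type*} [NormedAddCommGroup X] [NormedSpace ℝ X]
    {n : ℕ} (ν : (Fin n → X) → ℝ) (xs : Fin n → (X →L[ℝ] ℝ)) : ℝ :=
  sSup {r : ℝ | ∃ x : Fin n → X, ν x ≤ 1 ∧ r = ∑ i, xs i (x i)}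

theorem sum_map_sub_eq_of_sum_eq_zero {ι M N F : Type*} [Fintype ι] [AddCommGroup M]
    [AddCommGroup N] [FunLike F M N] [AddMonoidHomClass F M N] (f : ι → F)
    (hf : ∀ x, ∑ i, f i x = 0) (u w : M) (v : ι → M) :
    ∑ i, f i (u - v i) = ∑ i, f i (w - v i) := by
  simp only [map_sub, sum_sub_distrib, hf]

theorem stmt_14_general {X : Type*} [NormedAddCommGroup X] [NormedSpace ℝ X]
    (n : ℕ) (ν : (Fin n → X) → ℝ)
    (v : Fin n → X)
    (ub : X) (hub : ∀ u : X, ν (fun i => ub - v i) ≤ ν (fun i => u - v i))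
    (xs : Fin n → (X →L[ℝ] ℝ))
    (hsum : (∑ i, xs i) = 0)
    (heq : ∑ i, xs i (ub - v i) = ν (fun i => ub - v i)) :
    {u : X | ∀ w : X, ν (fun i => u - v i) ≤ ν (fun i => w - v i)} =
      {u : X | ∑ i, xs i (u - v i) = ν (fun i => u - v i)} := by
  have hxs : ∀ x, ∑ i, xs i x = 0 := fun x => by
    simpa using congr($hsum x)
  ext u
  have hconst := sum_map_sub_eq_of_sum_eq_zero xs hxs u ub v
  simp only [Set.mem_ofPred_eq]
  constructor
  · intro hmin
    linarith [hmin ub, hub u]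
  · intro hu w
    linarith [hub w]

theorem stmt_14 {X : Type*} [NormedAddCommGroup X] [NormedSpace ℝ X]
    (n : ℕ) (hn : 2 ≤ n) (ν : (Fin n → X) → ℝ)
    (hν0 : ∀ x : Fin n → X, ν x = 0 ↔ x = 0)
    (hνadd : ∀ x y : Fin n → X, ν (x + y) ≤ ν x + ν y)
    (hνsmul : ∀ (c : ℝ) (x : Fin n → X), ν (c • x) = |c| * ν x)
    (v : Fin n → X) (hv : Function.Injective v)
    (ub : X) (hub : ∀ u : X, ν (fun i => ub - v i) ≤ ν (fun i => u - v i))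
    (xs : Fin n → (X →L[ℝ] ℝ))
    (hsum : (∑ i, xs i) = 0)
    (hdual : dualNormOf ν xs = 1)
    (heq : ∑ i, xs i (ub - v i) = ν (fun i => ub - v i)) :
    {u : X | ∀ w : X, ν (fun i => u - v i) ≤ ν (fun i => w - v i)} =
      {u : X | ∑ i, xs i (u - v i) = ν (fun i => u - v i)} :=
  stmt_14_general n ν v ub hub xs hsum heq
end

section
/- Let (X,‖·‖) be a real normed space, v_1, v_2 ∈ X with v_1 ≠ v_2, and let ψ ∈ Ψ_2 be permutation-symmetric (ψ(t_1,t_2) = ψ(t_2,t_1) on Ω_2). Then the midpoint ū := (v_1+v_2)/2 is a global minimizer of the function f(u) := |||(u−v_1, u−v_2)|||_ψ over X, and the minimal value is f(ū) = ‖v_1 − v_2‖ · ψ(1/2, 1/2). -/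
/-!
The function `ψ` is convex and invariant under the swap of coordinates, so it is smallest at the
barycenter `(1/2, 1/2)` of `Ω_2`, where the renormalization inequality makes it at least `1/2`.
Hence `|||x|||_ψ ≥ (‖x₁‖ + ‖x₂‖) ψ(1/2, 1/2)` for every `x`, with equality when `‖x₁‖ = ‖x₂‖`. For
`x = (u - v₁, u - v₂)` the triangle inequality gives `‖x₁‖ + ‖x₂‖ ≥ ‖v₁ - v₂‖`, with equality and
balanced norms at the midpoint.
-/

open Finset

lemma PsiClass.half_le_apply_half {ψ : (Fin 2 → ℝ) → ℝ} (hψ : PsiClass 2 ψ) :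
    (1 / 2 : ℝ) ≤ ψ (fun _ => 1 / 2) := by
  have half_mem : (fun _ => (1 / 2 : ℝ)) ∈ stdSimplex ℝ (Fin 2) :=
    ⟨fun _ => by norm_num, by rw [Fin.sum_univ_two]; norm_num⟩
  have h := hψ.2.2.2 _ half_mem 0 (by norm_num)
  have he : (fun j : Fin 2 => if j = 0 then (0 : ℝ) else (1 / 2 : ℝ) / (1 - 1 / 2))
      = fun j => if j = 1 then 1 else 0 := by
    funext j
    fin_cases j <;> norm_num
  rw [he, hψ.2.2.1 1] at h
  linarith

lemma ConvexOn.apply_half_le_of_swap_invariant {f : (Fin 2 → ℝ) → ℝ}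
    (hf : ConvexOn ℝ (stdSimplex ℝ (Fin 2)) f)
    (hsym : ∀ t ∈ stdSimplex ℝ (Fin 2), f (t ∘ Equiv.swap 0 1) = f t)
    {t : Fin 2 → ℝ} (ht : t ∈ stdSimplex ℝ (Fin 2)) :
    f (fun _ => 1 / 2) ≤ f t := by
  have ht' : t ∘ Equiv.swap 0 1 ∈ stdSimplex ℝ (Fin 2) :=
    ⟨fun _ => ht.1 _, (Equiv.sum_comp (Equiv.swap 0 1) t).trans ht.2⟩
  have hsum : t 0 + t 1 = 1 := by simpa [Fin.sum_univ_two] using ht.2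
  have hmid : (1 / 2 : ℝ) • t + (1 / 2 : ℝ) • (t ∘ Equiv.swap 0 1) = fun _ => 1 / 2 := by
    funext j
    fin_cases j <;> simp <;> linarith
  have h := hf.2 ht ht' (by norm_num : (0 : ℝ) ≤ 1 / 2) (by norm_num : (0 : ℝ) ≤ 1 / 2)
    (by norm_num)
  rw [hmid, hsym t ht, smul_eq_mul] at h
  linarith

section prodNorm

variable {X : Type*} [NormedAddCommGroup X] {n : ℕ}

lemma sum_norm_pos_of_ne_zero {x : Fin n → X} (hx : x ≠ 0) : 0 < ∑ i, ‖x i‖ := by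
  obtain ⟨i, hi⟩ := Function.ne_iff.mp hx
  exact Finset.sum_pos' (fun _ _ => norm_nonneg _) ⟨i, mem_univ _, norm_pos_iff.mpr hi⟩

lemma normalized_norm_mem_stdSimplex {x : Fin n → X} (hx : x ≠ 0) :
    (fun i => ‖x i‖ / ∑ j, ‖x j‖) ∈ stdSimplex ℝ (Fin n) := by
  have hpos := sum_norm_pos_of_ne_zero hx
  exact ⟨fun _ => div_nonneg (norm_nonneg _) hpos.le, by rw [← sum_div, div_self hpos.ne']⟩

lemma sum_norm_mul_le_prodNorm {ψ : (Fin n → ℝ) → ℝ} {c : Fin n → ℝ}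
    (hmin : ∀ t ∈ stdSimplex ℝ (Fin n), ψ c ≤ ψ t) (x : Fin n → X) :
    (∑ i, ‖x i‖) * ψ c ≤ prodNorm ψ x := by
  by_cases hx : x = 0
  · simp [prodNorm, hx]
  rw [prodNorm, if_neg hx]
  exact mul_le_mul_of_nonneg_left (hmin _ (normalized_norm_mem_stdSimplex hx))
    (sum_nonneg fun _ _ => norm_nonneg _)

lemma prodNorm_of_norm_eq (ψ : (Fin n → ℝ) → ℝ) {x : Fin n → X} {r : ℝ}
    (hr : ∀ i, ‖x i‖ = r) : prodNorm ψ x = n * r * ψ (fun _ => (n : ℝ)⁻¹) := by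
  by_cases hx : x = 0
  · rcases n with _ | n
    · simp [prodNorm]
    · simp [prodNorm, hx, ← hr 0]
  have hsum : ∑ i, ‖x i‖ = n * r := by simp [hr]
  have hpos : 0 < (n : ℝ) * r := hsum ▸ sum_norm_pos_of_ne_zero hx
  rw [prodNorm, if_neg hx, hsum]
  congr 2
  funext i
  rw [hr i]
  field_simp [left_ne_zero_of_mul hpos.ne', right_ne_zero_of_mul hpos.ne']

end prodNorm

theorem stmt_15_general {X : Type*} [NormedAddCommGroup X] [NormedSpace ℝ X]
    (v₁ v₂ : X) (ψ : (Fin 2 → ℝ) → ℝ) (hψ : PsiClass 2 ψ)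
    (hsym : ∀ t ∈ stdSimplex ℝ (Fin 2), ψ (t ∘ Equiv.swap 0 1) = ψ t) :
    (∀ u : X,
        prodNorm ψ (fun i => (2 : ℝ)⁻¹ • (v₁ + v₂) - ![v₁, v₂] i) ≤
          prodNorm ψ (fun i => u - ![v₁, v₂] i)) ∧
      prodNorm ψ (fun i => (2 : ℝ)⁻¹ • (v₁ + v₂) - ![v₁, v₂] i) =
        ‖v₁ - v₂‖ * ψ (fun _ => 1 / 2) := by
  have hmid : ∀ i, ‖(2 : ℝ)⁻¹ • (v₁ + v₂) - ![v₁, v₂] i‖ = ‖v₁ - v₂‖ / 2 := by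
    have h := midpoint_eq_smul_add ℝ v₁ v₂
    rw [invOf_eq_inv] at h
    simp only [Fin.forall_fin_two, Matrix.cons_val_zero, Matrix.cons_val_one, ← h,
      ← dist_eq_norm, dist_midpoint_left, dist_midpoint_right]
    simp [div_eq_inv_mul]
  have hval : prodNorm ψ (fun i => (2 : ℝ)⁻¹ • (v₁ + v₂) - ![v₁, v₂] i) =
      ‖v₁ - v₂‖ * ψ (fun _ => 1 / 2) := by
    rw [prodNorm_of_norm_eq ψ hmid, one_div]
    push_cast
    ring
  refine ⟨fun u => ?_, hval⟩
  have hdist : ‖v₁ - v₂‖ ≤ ∑ i, ‖u - ![v₁, v₂] i‖ := by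
    simpa [Fin.sum_univ_two, norm_sub_rev u v₁] using norm_sub_le_norm_sub_add_norm_sub v₁ u v₂
  rw [hval]
  calc ‖v₁ - v₂‖ * ψ (fun _ => 1 / 2)
      ≤ (∑ i, ‖u - ![v₁, v₂] i‖) * ψ (fun _ => 1 / 2) :=
        mul_le_mul_of_nonneg_right hdist (by linarith [hψ.half_le_apply_half])
    _ ≤ prodNorm ψ (fun i => u - ![v₁, v₂] i) :=
        sum_norm_mul_le_prodNorm (fun _ => hψ.2.1.apply_half_le_of_swap_invariant hsym) _

theorem stmt_15 {X : Type*} [NormedAddCommGroup X] [NormedSpace ℝ X]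
    (v₁ v₂ : X) (hv : v₁ ≠ v₂) (ψ : (Fin 2 → ℝ) → ℝ) (hψ : PsiClass 2 ψ)
    (hsym : ∀ t ∈ stdSimplex ℝ (Fin 2), ψ (t ∘ Equiv.swap 0 1) = ψ t) :
    (∀ u : X,
        prodNorm ψ (fun i => (2 : ℝ)⁻¹ • (v₁ + v₂) - ![v₁, v₂] i) ≤
          prodNorm ψ (fun i => u - ![v₁, v₂] i)) ∧
      prodNorm ψ (fun i => (2 : ℝ)⁻¹ • (v₁ + v₂) - ![v₁, v₂] i) =
        ‖v₁ - v₂‖ * ψ (fun _ => 1 / 2) :=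
  stmt_15_general v₁ v₂ ψ hψ hsym
end

section
/- (Fermat–Torricelli problem.) Let (X,‖·‖) be a real normed space, n ≥ 2, and v_1,…,v_n ∈ X distinct. Define f(u) := Σ_{i=1}^n ‖u − v_i‖ for u ∈ X. Then: (a) ū ∈ X is a global minimizer of f if and only if there exist x*_1,…,x*_n ∈ X* such that Σ_{i=1}^n x*_i = 0, max_{1≤i≤n} ‖x*_i‖* = 1, and for every i = 1,…,n: ⟨x*_i, ū − v_i⟩ = ‖ū − v_i‖ and (‖x*_i‖* − 1)·‖ū − v_i‖ = 0. (b) If moreover ū ∉ {v_1,…,v_n} and x*_1,…,x*_n are as in (a), then the set of all global minimizers of f equals ∩_{i=1}^n {u ∈ X : ⟨x*_i, u − v_i⟩ = ‖x*_i‖*·‖u − v_i‖}. -/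
/-!
Sufficiency: if `∑ x*ᵢ = 0` and `‖x*ᵢ‖ ≤ 1`, then `u ↦ ∑ x*ᵢ (u - vᵢ)` is constant, bounds
`f` from below, and equals `f ū` when `x*ᵢ (ū - vᵢ) = ‖ū - vᵢ‖`; part (b) is the equality case of
this bound. Necessity: `ū` minimizes the convex function `w ↦ ∑ ‖ū - vᵢ + wᵢ‖` on `Xⁿ` along the
diagonal. Separating its strict epigraph from `diagonal × {f ū}` gives a subgradient `ℓ` at `0`
vanishing on the diagonal, and each `x*ᵢ := ℓ ∘ Pi.single i` is then a subgradient of the norm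
at `ū - vᵢ`, i.e. `‖x*ᵢ‖ ≤ 1` and `x*ᵢ (ū - vᵢ) = ‖ū - vᵢ‖`.
-/

open Finset

theorem ConvexOn.exists_subgradient_of_isMinOn_submodule {E : Type*} [AddCommGroup E]
    [Module ℝ E] [TopologicalSpace E] [IsTopologicalAddGroup E] [ContinuousSMul ℝ E]
    {F : E → ℝ} (hF : ConvexOn ℝ Set.univ F) (hFc : Continuous F) {V : Submodule ℝ E}
    (hmin : IsMinOn F V 0) :
    ∃ ℓ : StrongDual ℝ E, (∀ v ∈ V, ℓ v = 0) ∧ ∀ w, F 0 + ℓ w ≤ F w := by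
  have hopen : IsOpen {p : E × ℝ | p.1 ∈ Set.univ ∧ F p.1 < p.2} := by
    simp only [Set.mem_univ, true_and]
    exact isOpen_lt (hFc.comp continuous_fst) continuous_snd
  have hdisj : Disjoint {p : E × ℝ | p.1 ∈ Set.univ ∧ F p.1 < p.2} ((V : Set E) ×ˢ {F 0}) := by
    refine Set.disjoint_left.2 fun p hp hpV => ?_
    obtain ⟨hp1, hp2 : p.2 = F 0⟩ := Set.mem_prod.1 hpV
    exact (hmin hp1).not_gt (hp2 ▸ hp.2)
  obtain ⟨f, u, hlt, hge⟩ := geometric_hahn_banach_open hF.convex_strict_epigraph hopen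
    (V.convex.prod (convex_singleton (F 0))) hdisj
  set g := f.comp (.inl ℝ E ℝ)
  set β := f (0, 1)
  have hf : ∀ w r, f (w, r) = g w + r * β := fun w r => by
    rw [show (w, r) = ((w, 0) : E × ℝ) + r • (0, 1) by simp, map_add, map_smul, smul_eq_mul]
    rfl
  have hu : u ≤ F 0 * β := by simpa [hf] using hge (0, F 0) ⟨V.zero_mem, rfl⟩
  -- a linear functional bounded below on a subspace vanishes there
  have hgV : ∀ v ∈ V, g v = 0 := by
    intro v hv
    by_contra hgv
    have := hge (((u - F 0 * β - 1) / g v) • v, F 0) ⟨V.smul_mem _ hv, rfl⟩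
    rw [hf, map_smul, smul_eq_mul, div_mul_cancel₀ _ hgv] at this
    linarith
  have hβ : β < 0 := by
    have := hlt (0, F 0 + 1) ⟨trivial, by simp⟩
    rw [hf, map_zero] at this
    nlinarith
  refine ⟨(-β)⁻¹ • g, fun v hv => by simp [hgV v hv], fun w => ?_⟩
  refine le_of_forall_pos_lt_add fun ε hε => ?_
  have := hlt (w, F w + ε) ⟨trivial, by simp [hε]⟩
  rw [hf] at this
  have hβ' : 0 < -β := neg_pos.2 hβ
  have : g w / -β < F w + ε - F 0 := by
    rw [div_lt_iff₀ hβ']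
    nlinarith
  change F 0 + (-β)⁻¹ * g w < F w + ε
  rw [← div_eq_inv_mul]
  linarith

theorem sum_norm_add_single {E ι : Type*} [SeminormedAddCommGroup E] [Fintype ι]
    [DecidableEq ι] (z : ι → E) (i : ι) (h : E) :
    ∑ j, ‖z j + (Pi.single i h : ι → E) j‖ = ∑ j, ‖z j‖ + (‖z i + h‖ - ‖z i‖) := by
  rw [← sub_eq_iff_eq_add', ← Finset.sum_sub_distrib]
  exact (Fintype.sum_eq_single i fun j hj => by simp [hj]).trans (by simp)

section FermatTorricelli

variable {X : Type*} [NormedAddCommGroup X] [NormedSpace ℝ X] {ι : Type*} [Fintype ι]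

theorem convexOn_sum_norm_add (z : ι → X) :
    ConvexOn ℝ Set.univ fun w : ι → X => ∑ i, ‖z i + w i‖ := by
  have h : ConvexOn ℝ Set.univ (∑ i, fun w : ι → X => ‖z i + w i‖) :=
    Finset.sum_induction _ (ConvexOn ℝ Set.univ) (fun _ _ => ConvexOn.add)
      (convexOn_const 0 convex_univ) fun i _ =>
        ((convexOn_norm convex_univ).translate_right (z i)).comp_linearMap
          (LinearMap.proj (R := ℝ) (φ := fun _ : ι => X) i)
  simpa only [Finset.sum_fn] using h

theorem ContinuousLinearMap.norm_le_one_and_apply_eq_of_forall_norm_add_le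
    {φ : StrongDual ℝ X} {z : X} (h : ∀ y, ‖z‖ + φ y ≤ ‖z + y‖) : ‖φ‖ ≤ 1 ∧ φ z = ‖z‖ := by
  have hle : ∀ y, φ y ≤ ‖y‖ := fun y => by linarith [h y, norm_add_le z y]
  refine ⟨φ.opNorm_le_bound zero_le_one fun y => ?_, le_antisymm ?_ ?_⟩
  · rw [one_mul, Real.norm_eq_abs, abs_le]
    exact ⟨by linarith [hle (-y), φ.map_neg y, norm_neg y], hle y⟩
  · simpa using hle z
  · simpa using h (-z)

theorem ContinuousLinearMap.apply_le_norm_of_norm_le_one {φ : StrongDual ℝ X} (hφ : ‖φ‖ ≤ 1)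
    (y : X) : φ y ≤ ‖y‖ :=
  (le_abs_self _).trans <| by simpa using φ.le_of_opNorm_le hφ y

theorem ContinuousLinearMap.norm_eq_one_of_apply_eq_norm {φ : StrongDual ℝ X} {z : X}
    (hφ : ‖φ‖ ≤ 1) (hz : φ z = ‖z‖) (hz0 : z ≠ 0) : ‖φ‖ = 1 := by
  have : ‖z‖ ≤ ‖φ‖ * ‖z‖ :=
    calc ‖z‖ = φ z := hz.symm
      _ ≤ ‖φ z‖ := le_abs_self _
      _ ≤ ‖φ‖ * ‖z‖ := φ.le_opNorm z
  exact le_antisymm hφ (le_of_mul_le_mul_right (by simpa using this) (norm_pos_iff.2 hz0))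

theorem sum_apply_sub_eq_of_sum_eq_zero {xs : ι → StrongDual ℝ X} (hsum : ∑ i, xs i = 0)
    (v : ι → X) (u u' : X) : ∑ i, xs i (u - v i) = ∑ i, xs i (u' - v i) := by
  have h : ∀ w, ∑ i, xs i w = 0 := fun w => by
    simpa using congrArg (fun φ : StrongDual ℝ X => φ w) hsum
  simp only [map_sub, Finset.sum_sub_distrib, h]

structure IsFermatTorricelliCertificate (v : ι → X) (ub : X) (xs : ι → StrongDual ℝ X) :
    Prop where
  sum_eq_zero : ∑ i, xs i = 0
  norm_le_one : ∀ i, ‖xs i‖ ≤ 1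
  apply_eq_norm : ∀ i, xs i (ub - v i) = ‖ub - v i‖

namespace IsFermatTorricelliCertificate

variable {v : ι → X} {ub : X} {xs : ι → StrongDual ℝ X}

theorem of_iSup_eq_one (hsum : ∑ i, xs i = 0) (hsup : ⨆ i, ‖xs i‖ = 1)
    (heq : ∀ i, xs i (ub - v i) = ‖ub - v i‖) : IsFermatTorricelliCertificate v ub xs :=
  ⟨hsum, fun i => (le_ciSup (f := fun i => ‖xs i‖) (Set.finite_range _).bddAbove i).trans_eq hsup,
    heq⟩

theorem norm_eq_one (hxs : IsFermatTorricelliCertificate v ub xs) {i : ι} (hi : ub ≠ v i) :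
    ‖xs i‖ = 1 :=
  (xs i).norm_eq_one_of_apply_eq_norm (hxs.norm_le_one i) (hxs.apply_eq_norm i) (sub_ne_zero.2 hi)

theorem norm_sub_one_mul_norm_eq_zero (hxs : IsFermatTorricelliCertificate v ub xs) (i : ι) :
    (‖xs i‖ - 1) * ‖ub - v i‖ = 0 := by
  by_cases hi : ub = v i
  · simp [hi]
  · simp [hxs.norm_eq_one hi]

theorem iSup_norm_eq_one (hxs : IsFermatTorricelliCertificate v ub xs) {i₀ : ι}
    (hi₀ : ub ≠ v i₀) : ⨆ i, ‖xs i‖ = 1 :=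
  have : Nonempty ι := ⟨i₀⟩
  le_antisymm (ciSup_le hxs.norm_le_one) <| (hxs.norm_eq_one hi₀).symm.le.trans
    (le_ciSup (f := fun i => ‖xs i‖) (Set.finite_range _).bddAbove i₀)

theorem sum_apply_sub_eq (hxs : IsFermatTorricelliCertificate v ub xs) (u : X) :
    ∑ i, xs i (u - v i) = ∑ i, ‖ub - v i‖ := by
  rw [sum_apply_sub_eq_of_sum_eq_zero hxs.sum_eq_zero v u ub,
    Finset.sum_congr rfl fun i _ => hxs.apply_eq_norm i]

theorem apply_sub_le_norm (hxs : IsFermatTorricelliCertificate v ub xs) (u : X) (i : ι) :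
    xs i (u - v i) ≤ ‖u - v i‖ :=
  (xs i).apply_le_norm_of_norm_le_one (hxs.norm_le_one i) _

theorem isMinimizer (hxs : IsFermatTorricelliCertificate v ub xs) (u : X) :
    ∑ i, ‖ub - v i‖ ≤ ∑ i, ‖u - v i‖ :=
  hxs.sum_apply_sub_eq u ▸ Finset.sum_le_sum fun i _ => hxs.apply_sub_le_norm u i

theorem isMinimizer_iff (hxs : IsFermatTorricelliCertificate v ub xs) (u : X) :
    (∀ w, ∑ i, ‖u - v i‖ ≤ ∑ i, ‖w - v i‖) ↔ ∀ i, xs i (u - v i) = ‖u - v i‖ := by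
  have hval := hxs.sum_apply_sub_eq u
  have hterm : ∀ i ∈ Finset.univ, xs i (u - v i) ≤ ‖u - v i‖ :=
    fun i _ => hxs.apply_sub_le_norm u i
  constructor
  · intro hu i
    refine (Finset.sum_eq_sum_iff_of_le hterm).1 ?_ i (Finset.mem_univ i)
    exact le_antisymm (Finset.sum_le_sum hterm) (hval ▸ hu ub)
  · intro hu w
    rw [← Finset.sum_congr rfl fun i _ => hu i, hval]
    exact hxs.isMinimizer w

end IsFermatTorricelliCertificate

theorem exists_isFermatTorricelliCertificate {v : ι → X} {ub : X}
    (hub : ∀ u, ∑ i, ‖ub - v i‖ ≤ ∑ i, ‖u - v i‖) :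
    ∃ xs, IsFermatTorricelliCertificate v ub xs := by
  classical
  let z i := ub - v i
  let diagonal : X →ₗ[ℝ] ι → X := LinearMap.pi fun _ => LinearMap.id
  have hmin : IsMinOn (fun w : ι → X => ∑ i, ‖z i + w i‖) (LinearMap.range diagonal) 0 := by
    rintro _ ⟨h, rfl⟩
    simpa [z, diagonal, sub_add_eq_add_sub] using hub (ub + h)
  obtain ⟨ℓ, hℓV, hℓ⟩ := (convexOn_sum_norm_add z).exists_subgradient_of_isMinOn_submodule
    (by fun_prop) hmin
  let xs i : StrongDual ℝ X := ℓ.comp (.single ℝ (fun _ => X) i)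
  have hcoord (i : ι) (h : X) : ‖z i‖ + xs i h ≤ ‖z i + h‖ := by
    have := hℓ (Pi.single i h)
    simp only [Pi.zero_apply, add_zero, sum_norm_add_single] at this
    change ‖z i‖ + ℓ (Pi.single i h) ≤ ‖z i + h‖
    linarith
  have hxs i := ContinuousLinearMap.norm_le_one_and_apply_eq_of_forall_norm_add_le (hcoord i)
  refine ⟨xs, ⟨?_, fun i => (hxs i).1, fun i => (hxs i).2⟩⟩
  ext h
  simpa [xs] using (ContinuousLinearMap.sum_comp_single (L := ℓ) (v := fun _ => h)).trans
    (hℓV _ ⟨h, rfl⟩)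

end FermatTorricelli

theorem stmt_17 {X : Type*} [NormedAddCommGroup X] [NormedSpace ℝ X]
    (n : ℕ) (hn : 2 ≤ n) (v : Fin n → X) (hv : Function.Injective v) :
    (∀ ub : X,
      (∀ u : X, ∑ i, ‖ub - v i‖ ≤ ∑ i, ‖u - v i‖) ↔
        ∃ xs : Fin n → (X →L[ℝ] ℝ),
          (∑ i, xs i) = 0 ∧ (⨆ i, ‖xs i‖) = 1 ∧
          ∀ i, xs i (ub - v i) = ‖ub - v i‖ ∧ (‖xs i‖ - 1) * ‖ub - v i‖ = 0) ∧
    (∀ ub : X, ∀ xs : Fin n → (X →L[ℝ] ℝ),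
      (∀ u : X, ∑ i, ‖ub - v i‖ ≤ ∑ i, ‖u - v i‖) →
      (∑ i, xs i) = 0 → (⨆ i, ‖xs i‖) = 1 →
      (∀ i, xs i (ub - v i) = ‖ub - v i‖ ∧ (‖xs i‖ - 1) * ‖ub - v i‖ = 0) →
      (∀ i, ub ≠ v i) →
      {u : X | ∀ w : X, ∑ i, ‖u - v i‖ ≤ ∑ i, ‖w - v i‖} =
        ⋂ i, {u : X | xs i (u - v i) = ‖xs i‖ * ‖u - v i‖}) := by
  have : Nontrivial (Fin n) := Fin.nontrivial_iff_two_le.2 hn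
  refine ⟨fun ub => ⟨fun hub => ?_, fun ⟨xs, hsum, hsup, h⟩ =>
    (IsFermatTorricelliCertificate.of_iSup_eq_one hsum hsup fun i => (h i).1).isMinimizer⟩, ?_⟩
  · obtain ⟨xs, hxs⟩ := exists_isFermatTorricelliCertificate hub
    obtain ⟨i₀, hi₀⟩ := hv.exists_ne ub
    exact ⟨xs, hxs.sum_eq_zero, hxs.iSup_norm_eq_one hi₀.symm,
      fun i => ⟨hxs.apply_eq_norm i, hxs.norm_sub_one_mul_norm_eq_zero i⟩⟩
  · intro ub xs _ hsum hsup h hne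
    have hone (i : Fin n) : ‖xs i‖ = 1 := sub_eq_zero.1 <|
      (mul_eq_zero.1 (h i).2).resolve_right (norm_ne_zero_iff.2 (sub_ne_zero.2 (hne i)))
    ext u
    simp only [Set.mem_ofPred_eq, Set.mem_iInter, hone, one_mul]
    exact (IsFermatTorricelliCertificate.of_iSup_eq_one hsum hsup fun i => (h i).1).isMinimizer_iff u
end

section
/- (Chebyshev centre problem.) Let (X,‖·‖) be a real normed space, n ≥ 2, and v_1,…,v_n ∈ X distinct. Define f(u) := max_{1≤i≤n} ‖u − v_i‖ for u ∈ X. Then: (a) ū ∈ X is a global minimizer of f if and only if there exist x*_1,…,x*_n ∈ X* such that Σ_{i=1}^n x*_i = 0, Σ_{i=1}^n ‖x*_i‖* = 1, and for every i = 1,…,n: ⟨x*_i, ū − v_i⟩ = ‖x*_i‖*·‖ū − v_i‖ and (‖ū − v_i‖ − max_{1≤j≤n} ‖ū − v_j‖)·‖x*_i‖* = 0. (b) If x*_1,…,x*_n are as in (a), then the set of all global minimizers of f equals the intersection, over those indices i with x*_i ≠ 0, of the sets {u ∈ X : ⟨x*_i, u − v_i⟩ = ‖x*_i‖* · max_{1≤j≤n}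 ‖u − v_j‖}. -/
/-!
Minimizing `u ↦ max_i ‖u - v_i‖` is computing the distance from `(v_i)_i` to the diagonal in
`X^n` with the sup norm. Hahn–Banach in the quotient by the diagonal gives a norm-one functional
on `X^n` vanishing on the diagonal and attaining this distance; its components `x*_i` sum to zero
and, the dual of the sup norm being the `ℓ¹` norm, have total norm at most one. Conversely such a
family gives the lower bound `∑ x*_i (u - v_i) ≤ max_i ‖u - v_i‖`, whose left side does not depend
on `u`; the alignment conditions say exactly that the bound is attained, both at `ū` and at every
other minimizer.
-/

open Finset

namespace ContinuousLinearMap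

variable {E : Type*} [NormedAddCommGroup E] [NormedSpace ℝ E]

theorem exists_norm_le_one_lt_apply (f : E →L[ℝ] ℝ) {r : ℝ} (hr : r < ‖f‖) :
    ∃ z : E, ‖z‖ ≤ 1 ∧ r < f z := by
  obtain ⟨x, hx, hrx⟩ := f.exists_lt_apply_of_lt_opNorm hr
  rcases le_or_gt 0 (f x) with hfx | hfx
  · exact ⟨x, hx.le, by rwa [Real.norm_of_nonneg hfx] at hrx⟩
  · refine ⟨-x, by rw [norm_neg]; exact hx.le, ?_⟩
    rwa [Real.norm_of_nonpos hfx.le, ← map_neg] at hrx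

theorem sum_norm_comp_single_le {ι : Type*} [Fintype ι] [DecidableEq ι]
    (φ : (ι → E) →L[ℝ] ℝ) :
    ∑ i, ‖φ.comp (single ℝ (fun _ => E) i)‖ ≤ ‖φ‖ := by
  refine le_of_forall_pos_le_add fun ε hε => ?_
  set δ := ε / (Fintype.card ι + 1)
  have hδ : Fintype.card ι * δ ≤ ε := by
    rw [mul_div_assoc', div_le_iff₀ (by positivity)]
    nlinarith
  choose z hz1 hz2 using fun i => (φ.comp (single ℝ (fun _ => E) i)).exists_norm_le_one_lt_apply
    (sub_lt_self _ (by positivity : 0 < δ))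
  have hz : ‖z‖ ≤ 1 := (pi_norm_le_iff_of_nonneg zero_le_one).2 hz1
  calc ∑ i, ‖φ.comp (single ℝ (fun _ => E) i)‖
      = ∑ i, (‖φ.comp (single ℝ (fun _ => E) i)‖ - δ) + Fintype.card ι * δ := by
        rw [sum_sub_distrib, sum_const, card_univ, nsmul_eq_mul, sub_add_cancel]
    _ ≤ ∑ i, φ (Pi.single i (z i)) + ε :=
        add_le_add (sum_le_sum fun i _ => (hz2 i).le) hδ
    _ = φ z + ε := by rw [← map_sum, univ_sum_single]
    _ ≤ ‖φ‖ + ε := by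
        gcongr
        exact (Real.le_norm_self _).trans <| (φ.le_opNorm z).trans <|
          mul_le_of_le_one_right (norm_nonneg φ) hz

end ContinuousLinearMap

theorem Submodule.exists_dual_eq_zero_of_le_norm_sub {E : Type*} [SeminormedAddCommGroup E]
    [NormedSpace ℝ E] (S : Submodule ℝ E) {x : E} {r : ℝ} (hr : ∀ s ∈ S, r ≤ ‖x - s‖) :
    ∃ φ : StrongDual ℝ E, ‖φ‖ ≤ 1 ∧ (∀ s ∈ S, φ s = 0) ∧ r ≤ φ x := by
  have hrx : r ≤ ‖S.mkQ x‖ := by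
    refine le_of_forall_pos_lt_add fun ε hε => ?_
    obtain ⟨y, hy, hyε⟩ := Submodule.Quotient.norm_mk_lt (S.mkQ x) hε
    calc r ≤ ‖x - (x - y)‖ := hr _ ((Submodule.Quotient.eq S).1 hy.symm)
      _ = ‖y‖ := by rw [sub_sub_cancel]
      _ < ‖S.mkQ x‖ + ε := hyε
  obtain ⟨g, hg, hgx⟩ := exists_dual_vector'' ℝ (S.mkQ x)
  replace hgx : g (S.mkQ x) = ‖S.mkQ x‖ := by exact_mod_cast hgx
  refine ⟨g.comp S.mkQL, ?_, fun s hs => ?_, ?_⟩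
  · refine ContinuousLinearMap.opNorm_le_bound _ zero_le_one fun y => ?_
    calc ‖g (S.mkQ y)‖ ≤ ‖g‖ * ‖S.mkQ y‖ := g.le_opNorm _
      _ ≤ 1 * ‖y‖ := by gcongr; exact Submodule.Quotient.norm_mk_le S y
  · simp [(Submodule.Quotient.mk_eq_zero S).2 hs]
  · exact hrx.trans_eq hgx.symm

theorem ContinuousLinearMap.apply_eq_norm_mul_and_iff {X : Type*} [SeminormedAddCommGroup X]
    [NormedSpace ℝ X] (φ : X →L[ℝ] ℝ) {w : X} {m : ℝ} (hw : ‖w‖ ≤ m) :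
    (φ w = ‖φ‖ * ‖w‖ ∧ (‖w‖ - m) * ‖φ‖ = 0) ↔ φ w = ‖φ‖ * m := by
  constructor
  · rintro ⟨hal, hslack⟩
    linear_combination hal + hslack
  · intro h
    have hle : φ w ≤ ‖φ‖ * ‖w‖ := (Real.le_norm_self _).trans (φ.le_opNorm w)
    have hal : φ w = ‖φ‖ * ‖w‖ :=
      le_antisymm hle (h ▸ mul_le_mul_of_nonneg_left hw (norm_nonneg φ))
    exact ⟨hal, by linear_combination h - hal⟩

namespace ChebyshevCenter

variable {X : Type*} [NormedAddCommGroup X] {ι : Type*} [Fintype ι] (v : ι → X)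

theorem norm_sub_le_iSup (u : X) (i : ι) : ‖u - v i‖ ≤ ⨆ j, ‖u - v j‖ :=
  le_ciSup (f := fun j => ‖u - v j‖) (Set.finite_range _).bddAbove i

theorem iSup_norm_sub_pos [Nontrivial ι] {v : ι → X} (hv : Function.Injective v) (u : X) :
    0 < ⨆ j, ‖u - v j‖ := by
  obtain ⟨i, j, hij⟩ := exists_pair_ne ι
  by_contra! h
  have hu : ∀ k, u = v k := fun k =>
    sub_eq_zero.1 (norm_le_zero_iff.1 ((norm_sub_le_iSup v u k).trans h))
  exact hij (hv ((hu i).symm.trans (hu j)))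

variable [NormedSpace ℝ X]

theorem apply_sub_le_norm_mul_iSup (φ : X →L[ℝ] ℝ) (u : X) (i : ι) :
    φ (u - v i) ≤ ‖φ‖ * ⨆ j, ‖u - v j‖ :=
  (Real.le_norm_self _).trans <| (φ.le_opNorm _).trans <|
    mul_le_mul_of_nonneg_left (norm_sub_le_iSup v u i) (norm_nonneg φ)

theorem sum_apply_sub_le (xs : ι → X →L[ℝ] ℝ) (u : X) :
    ∑ i, xs i (u - v i) ≤ (∑ i, ‖xs i‖) * ⨆ j, ‖u - v j‖ := by
  rw [sum_mul]
  exact sum_le_sum fun i _ => apply_sub_le_norm_mul_iSup v (xs i) u i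

theorem sum_apply_sub_eq_iSup_iff {xs : ι → X →L[ℝ] ℝ} (h1 : ∑ i, ‖xs i‖ = 1) (u : X) :
    ∑ i, xs i (u - v i) = ⨆ j, ‖u - v j‖ ↔ ∀ i, xs i (u - v i) = ‖xs i‖ * ⨆ j, ‖u - v j‖ := by
  conv_lhs => rw [← one_mul (⨆ j, ‖u - v j‖), ← h1, sum_mul]
  rw [sum_eq_sum_iff_of_le fun i _ => apply_sub_le_norm_mul_iSup v (xs i) u i]
  simp only [mem_univ, forall_const]

theorem sum_apply_sub_eq_of_sum_eq_zero {xs : ι → X →L[ℝ] ℝ} (h0 : ∑ i, xs i = 0) (u w : X) :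
    ∑ i, xs i (u - v i) = ∑ i, xs i (w - v i) := by
  simp_rw [← sub_add_sub_cancel u w (v _), map_add, sum_add_distrib,
    ← _root_.sum_apply, h0, zero_apply, zero_add]

theorem forall_apply_eq_norm_mul_and_iff {xs : ι → X →L[ℝ] ℝ} (h1 : ∑ i, ‖xs i‖ = 1) (u : X) :
    (∀ i, xs i (u - v i) = ‖xs i‖ * ‖u - v i‖ ∧
        (‖u - v i‖ - ⨆ j, ‖u - v j‖) * ‖xs i‖ = 0) ↔
      ∑ i, xs i (u - v i) = ⨆ j, ‖u - v j‖ := by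
  rw [sum_apply_sub_eq_iSup_iff v h1]
  exact forall_congr' fun i => (xs i).apply_eq_norm_mul_and_iff (norm_sub_le_iSup v u i)

theorem iSup_le_of_sum_apply_sub_eq {ub : X} {xs : ι → X →L[ℝ] ℝ} (h0 : ∑ i, xs i = 0)
    (h1 : ∑ i, ‖xs i‖ = 1) (hub : ∑ i, xs i (ub - v i) = ⨆ j, ‖ub - v j‖) (u : X) :
    ⨆ j, ‖ub - v j‖ ≤ ⨆ j, ‖u - v j‖ :=
  calc ⨆ j, ‖ub - v j‖ = ∑ i, xs i (u - v i) := by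
        rw [← hub, sum_apply_sub_eq_of_sum_eq_zero v h0]
    _ ≤ (∑ i, ‖xs i‖) * ⨆ j, ‖u - v j‖ := sum_apply_sub_le v xs u
    _ = ⨆ j, ‖u - v j‖ := by rw [h1, one_mul]

theorem exists_sum_apply_sub_eq_of_forall_iSup_le [Nonempty ι] {ub : X}
    (hmin : ∀ u : X, ⨆ j, ‖ub - v j‖ ≤ ⨆ j, ‖u - v j‖) (hpos : 0 < ⨆ j, ‖ub - v j‖) :
    ∃ xs : ι → X →L[ℝ] ℝ, ∑ i, xs i = 0 ∧ ∑ i, ‖xs i‖ = 1 ∧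
      ∑ i, xs i (ub - v i) = ⨆ j, ‖ub - v j‖ := by
  classical
  set m := ⨆ j, ‖ub - v j‖
  let diagonal : Submodule ℝ (ι → X) := LinearMap.range (LinearMap.pi fun _ => LinearMap.id)
  let w : ι → X := fun i => ub - v i
  have hdist : ∀ s ∈ diagonal, m ≤ ‖w - s‖ := by
    rintro _ ⟨c, rfl⟩
    refine (hmin (ub - c)).trans (ciSup_le fun i => ?_)
    calc ‖ub - c - v i‖ = ‖(w - Function.const ι c) i‖ := by
          rw [Pi.sub_apply, sub_right_comm]; rfl
      _ ≤ ‖w - Function.const ι c‖ := norm_le_pi_norm _ i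
  obtain ⟨φ, hφ, hφ0, hφw⟩ := diagonal.exists_dual_eq_zero_of_le_norm_sub hdist
  set xs : ι → X →L[ℝ] ℝ := fun i => φ.comp (ContinuousLinearMap.single ℝ (fun _ => X) i)
  have hsum : ∑ i, xs i = 0 := by
    ext x
    simp only [xs, _root_.sum_apply, ContinuousLinearMap.comp_apply,
      ContinuousLinearMap.single_apply, ← map_sum, univ_sum_single fun _ : ι => x]
    exact hφ0 _ ⟨x, rfl⟩
  have hφsum : φ w = ∑ i, xs i (ub - v i) := by
    simp only [xs, ContinuousLinearMap.comp_apply, ContinuousLinearMap.single_apply, ← map_sum,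
      univ_sum_single]
    rfl
  have hnorm : ∑ i, ‖xs i‖ ≤ 1 := φ.sum_norm_comp_single_le.trans hφ
  have hweak : φ w ≤ (∑ i, ‖xs i‖) * m := by
    rw [hφsum]
    exact sum_apply_sub_le v xs ub
  have hnorm1 : ∑ i, ‖xs i‖ = 1 := le_antisymm hnorm (le_of_mul_le_mul_right (by linarith) hpos)
  rw [hnorm1, one_mul] at hweak
  exact ⟨xs, hsum, hnorm1, hφsum ▸ le_antisymm hweak hφw⟩

theorem setOf_forall_iSup_le_eq {ub : X} {xs : ι → X →L[ℝ] ℝ}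
    (hmin : ∀ u : X, ⨆ j, ‖ub - v j‖ ≤ ⨆ j, ‖u - v j‖) (h0 : ∑ i, xs i = 0)
    (h1 : ∑ i, ‖xs i‖ = 1) (hub : ∑ i, xs i (ub - v i) = ⨆ j, ‖ub - v j‖) :
    {u : X | ∀ w : X, ⨆ j, ‖u - v j‖ ≤ ⨆ j, ‖w - v j‖} =
      ⋂ i, ⋂ (_ : xs i ≠ 0), {u : X | xs i (u - v i) = ‖xs i‖ * ⨆ j, ‖u - v j‖} := by
  ext u
  have hval : ∑ i, xs i (u - v i) = ⨆ j, ‖ub - v j‖ :=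
    (sum_apply_sub_eq_of_sum_eq_zero v h0 u ub).trans hub
  simp only [Set.mem_ofPred_eq, Set.mem_iInter]
  calc (∀ w, ⨆ j, ‖u - v j‖ ≤ ⨆ j, ‖w - v j‖) ↔ ⨆ j, ‖ub - v j‖ = ⨆ j, ‖u - v j‖ :=
        ⟨fun h => le_antisymm (hmin u) (h ub), fun h w => h ▸ hmin w⟩
    _ ↔ ∑ i, xs i (u - v i) = ⨆ j, ‖u - v j‖ := by rw [hval]
    _ ↔ ∀ i, xs i (u - v i) = ‖xs i‖ * ⨆ j, ‖u - v j‖ := sum_apply_sub_eq_iSup_iff v h1 u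
    _ ↔ ∀ i, xs i ≠ 0 → xs i (u - v i) = ‖xs i‖ * ⨆ j, ‖u - v j‖ := forall_congr' fun i =>
        ⟨fun h _ => h, fun h => (eq_or_ne (xs i) 0).elim (fun hi => by simp [hi]) h⟩

end ChebyshevCenter

open Finset ChebyshevCenter

theorem stmt_18 {X : Type*} [NormedAddCommGroup X] [NormedSpace ℝ X]
    (n : ℕ) (hn : 2 ≤ n) (v : Fin n → X) (hv : Function.Injective v) :
    (∀ ub : X,
      (∀ u : X, (⨆ i, ‖ub - v i‖) ≤ ⨆ i, ‖u - v i‖) ↔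
        ∃ xs : Fin n → (X →L[ℝ] ℝ),
          (∑ i, xs i) = 0 ∧ (∑ i, ‖xs i‖) = 1 ∧
          ∀ i, xs i (ub - v i) = ‖xs i‖ * ‖ub - v i‖ ∧
            (‖ub - v i‖ - ⨆ j, ‖ub - v j‖) * ‖xs i‖ = 0) ∧
    (∀ ub : X, ∀ xs : Fin n → (X →L[ℝ] ℝ),
      (∀ u : X, (⨆ i, ‖ub - v i‖) ≤ ⨆ i, ‖u - v i‖) →
      (∑ i, xs i) = 0 → (∑ i, ‖xs i‖) = 1 →
      (∀ i, xs i (ub - v i) = ‖xs i‖ * ‖ub - v i‖ ∧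
        (‖ub - v i‖ - ⨆ j, ‖ub - v j‖) * ‖xs i‖ = 0) →
      {u : X | ∀ w : X, (⨆ i, ‖u - v i‖) ≤ ⨆ i, ‖w - v i‖} =
        ⋂ i, ⋂ (_ : xs i ≠ 0),
          {u : X | xs i (u - v i) = ‖xs i‖ * ⨆ j, ‖u - v j‖}) := by
  have : Nontrivial (Fin n) := Fin.nontrivial_iff_two_le.mpr hn
  refine ⟨fun ub => ⟨fun hmin => ?_, ?_⟩, fun ub xs hmin h0 h1 hcond => ?_⟩
  · obtain ⟨xs, h0, h1, hub⟩ :=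
      exists_sum_apply_sub_eq_of_forall_iSup_le v hmin (iSup_norm_sub_pos hv ub)
    exact ⟨xs, h0, h1, (forall_apply_eq_norm_mul_and_iff v h1 ub).2 hub⟩
  · rintro ⟨xs, h0, h1, hcond⟩
    exact iSup_le_of_sum_apply_sub_eq v h0 h1 ((forall_apply_eq_norm_mul_and_iff v h1 ub).1 hcond)
  · exact setOf_forall_iSup_le_eq v hmin h0 h1 ((forall_apply_eq_norm_mul_and_iff v h1 ub).1 hcond)
end
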